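/- If for all (s,a) the total variation distance between two Markov transition kernels P̂ and P is at most a uniform bound u(s,a), rewards are bounded by r_max, and the policy, starting distribution are shared, then the difference in expected discounted returns of any policy π under P̂ versus P is at most (2γ r_max / (1-γ)²) · sup_{s,a} u(s,a). -/

import Mathlib

/-!
Let `u* = sup u`, so `‖P̂(s,a) - P(s,a)‖₁ ≤ 2u*`. Write `Pπ s s' = ∑ₐ π(a|s) P(s'|s,a)` for the
state chain and `dₜ`, `d̂ₜ` for the state distributions at time `t`. Splitting
`d̂ₜ₊₁ - dₜ₊₁ = (d̂ₜ - dₜ) P̂π + dₜ (P̂π - Pπ)`, the first term does not increase the `ℓ¹` norm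
(`P̂π` is stochastic) and the second has norm at most `2u*`, so `‖d̂ₜ - dₜ‖₁ ≤ 2tu*`. The
per-step expected rewards therefore differ by at most `2tu* r_max`, and
`∑ₜ t γ^t = γ / (1 - γ)²`.
-/

open Finset

/-- State distribution after `t` steps, following policy `pol` under
transition kernel `P`, starting from initial distribution `ρ`. -/
noncomputable def distAt {S A : Type*} [Fintype S] [Fintype A]
    (P : S → A → S → ℝ) (pol : S → A → ℝ) (ρ : S → ℝ) : ℕ → S → ℝ
  | 0 => ρ
  | t + 1 => fun s' => ∑ s, ∑ a, distAt P pol ρ t s * pol s a * P s a s'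

/-- Expected discounted return `J_ρ(π) = E[∑_t γ^t r(s_t,a_t)]` of policy
`pol` under kernel `P`, reward `r`, discount `γ`, initial distribution `ρ`. -/
noncomputable def ret {S A : Type*} [Fintype S] [Fintype A]
    (P : S → A → S → ℝ) (pol : S → A → ℝ) (r : S → A → ℝ) (γ : ℝ) (ρ : S → ℝ) : ℝ :=
  ∑' t : ℕ, γ ^ t * ∑ s, ∑ a, distAt P pol ρ t s * pol s a * r s a

/-- Total variation distance between two (sub)distributions on a finite set:
half the `ℓ¹` distance. -/
noncomputable def tvDist {S : Type*} [Fintype S] (ρ₁ ρ₂ : S → ℝ) : ℝ :=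
  (1 / 2) * ∑ s, |ρ₁ s - ρ₂ s|

theorem sum_abs_sum_mul_le {ι κ : Type*} [Fintype ι] [Fintype κ] (μ : ι → ℝ)
    (K : ι → κ → ℝ) :
    ∑ j, |∑ i, μ i * K i j| ≤ ∑ i, |μ i| * ∑ j, |K i j| :=
  calc ∑ j, |∑ i, μ i * K i j|
      ≤ ∑ j, ∑ i, |μ i| * |K i j| :=
        sum_le_sum fun j _ => (abs_sum_le_sum_abs _ _).trans_eq (by simp only [abs_mul])
    _ = ∑ i, |μ i| * ∑ j, |K i j| := by rw [sum_comm]; simp only [mul_sum]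

theorem abs_sum_mul_le_of_abs_le {ι : Type*} [Fintype ι] (μ f : ι → ℝ) {c : ℝ}
    (hf : ∀ i, |f i| ≤ c) : |∑ i, μ i * f i| ≤ (∑ i, |μ i|) * c :=
  calc |∑ i, μ i * f i| ≤ ∑ i, |μ i| * |f i| :=
        (abs_sum_le_sum_abs _ _).trans_eq (by simp only [abs_mul])
    _ ≤ ∑ i, |μ i| * c := sum_le_sum fun i _ => mul_le_mul_of_nonneg_left (hf i) (abs_nonneg _)
    _ = (∑ i, |μ i|) * c := (sum_mul _ _ _).symm

section Series

variable {γ : ℝ} (hγ0 : 0 ≤ γ) (hγ1 : γ < 1)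
include hγ0 hγ1

theorem summable_pow_mul_of_abs_le {x : ℕ → ℝ} {C : ℝ} (hx : ∀ t, |x t| ≤ C) :
    Summable fun t => γ ^ t * x t :=
  Summable.of_norm_bounded (f := fun t => γ ^ t * x t)
    ((summable_geometric_of_lt_one hγ0 hγ1).mul_right C) fun t => by
    rw [Real.norm_eq_abs, abs_mul, abs_pow, abs_of_nonneg hγ0]
    exact mul_le_mul_of_nonneg_left (hx t) (pow_nonneg hγ0 t)

theorem abs_tsum_pow_mul_le {z : ℕ → ℝ} {D : ℝ} (hz : ∀ t, |z t| ≤ t * D) :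
    |∑' t, γ ^ t * z t| ≤ D * (γ / (1 - γ) ^ 2) := by
  have hγn : ‖γ‖ < 1 := by rwa [Real.norm_of_nonneg hγ0]
  refine tsum_of_norm_bounded (f := fun t => γ ^ t * z t)
    ((hasSum_coe_mul_geometric_of_norm_lt_one hγn).mul_left D)
    fun t => ?_
  rw [Real.norm_eq_abs, abs_mul, abs_pow, abs_of_nonneg hγ0]
  calc γ ^ t * |z t| ≤ γ ^ t * (t * D) := mul_le_mul_of_nonneg_left (hz t) (pow_nonneg hγ0 t)
    _ = D * (t * γ ^ t) := by ring

end Series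

section MDP

variable {S A : Type*} [Fintype A]

noncomputable def stateKernel (P : S → A → S → ℝ) (pol : S → A → ℝ) (s s' : S) : ℝ :=
  ∑ a, pol s a * P s a s'

noncomputable def policyReward (pol : S → A → ℝ) (r : S → A → ℝ) (s : S) : ℝ :=
  ∑ a, pol s a * r s a

variable {P Phat : S → A → S → ℝ} {pol : S → A → ℝ} {ρ : S → ℝ}

theorem stateKernel_nonneg (hP0 : ∀ s a s', 0 ≤ P s a s') (hpol0 : ∀ s a, 0 ≤ pol s a)
    (s s' : S) : 0 ≤ stateKernel P pol s s' :=
  sum_nonneg fun a _ => mul_nonneg (hpol0 s a) (hP0 s a s')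

theorem abs_policyReward_le {r : S → A → ℝ} {rmax : ℝ} (hpol0 : ∀ s a, 0 ≤ pol s a)
    (hpol1 : ∀ s, ∑ a, pol s a = 1) (hr : ∀ s a, 0 ≤ r s a ∧ r s a ≤ rmax) (s : S) :
    |policyReward pol r s| ≤ rmax := by
  unfold policyReward
  rw [abs_of_nonneg (sum_nonneg fun a _ => mul_nonneg (hpol0 s a) (hr s a).1)]
  calc ∑ a, pol s a * r s a ≤ ∑ a, pol s a * rmax :=
        sum_le_sum fun a _ => mul_le_mul_of_nonneg_left (hr s a).2 (hpol0 s a)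
    _ = rmax := by rw [← sum_mul, hpol1, one_mul]

variable [Fintype S]

theorem distAt_succ (t : ℕ) (s' : S) :
    distAt P pol ρ (t + 1) s' = ∑ s, distAt P pol ρ t s * stateKernel P pol s s' := by
  simp only [distAt, stateKernel, mul_sum, mul_assoc]

theorem ret_eq (r : S → A → ℝ) (γ : ℝ) :
    ret P pol r γ ρ = ∑' t, γ ^ t * ∑ s, distAt P pol ρ t s * policyReward pol r s := by
  simp only [ret, policyReward, mul_sum, mul_assoc]

theorem sum_stateKernel (hP1 : ∀ s a, ∑ s', P s a s' = 1) (hpol1 : ∀ s, ∑ a, pol s a = 1)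
    (s : S) : ∑ s', stateKernel P pol s s' = 1 := by
  simp only [stateKernel]
  rw [sum_comm]
  simp only [← mul_sum, hP1, mul_one, hpol1]

theorem sum_abs_stateKernel (hP0 : ∀ s a s', 0 ≤ P s a s') (hP1 : ∀ s a, ∑ s', P s a s' = 1)
    (hpol0 : ∀ s a, 0 ≤ pol s a) (hpol1 : ∀ s, ∑ a, pol s a = 1) (s : S) :
    ∑ s', |stateKernel P pol s s'| = 1 := by
  simp only [abs_of_nonneg (stateKernel_nonneg hP0 hpol0 _ _), sum_stateKernel hP1 hpol1]

theorem distAt_nonneg (hP0 : ∀ s a s', 0 ≤ P s a s') (hpol0 : ∀ s a, 0 ≤ pol s a)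
    (hρ0 : ∀ s, 0 ≤ ρ s) (t : ℕ) (s : S) : 0 ≤ distAt P pol ρ t s := by
  induction t generalizing s with
  | zero => exact hρ0 s
  | succ t ih =>
    rw [distAt_succ]
    exact sum_nonneg fun s _ => mul_nonneg (ih s) (stateKernel_nonneg hP0 hpol0 _ _)

theorem sum_distAt (hP1 : ∀ s a, ∑ s', P s a s' = 1) (hpol1 : ∀ s, ∑ a, pol s a = 1)
    (t : ℕ) :
    ∑ s, distAt P pol ρ t s = ∑ s, ρ s := by
  induction t with
  | zero => rfl
  | succ t ih =>
    simp only [distAt_succ]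
    rw [sum_comm]
    simp only [← mul_sum, sum_stateKernel hP1 hpol1, mul_one, ih]

theorem sum_abs_distAt (hP0 : ∀ s a s', 0 ≤ P s a s') (hP1 : ∀ s a, ∑ s', P s a s' = 1)
    (hpol0 : ∀ s a, 0 ≤ pol s a) (hpol1 : ∀ s, ∑ a, pol s a = 1)
    (hρ0 : ∀ s, 0 ≤ ρ s) (hρ1 : ∑ s, ρ s = 1) (t : ℕ) :
    ∑ s, |distAt P pol ρ t s| = 1 := by
  simp only [abs_of_nonneg (distAt_nonneg hP0 hpol0 hρ0 t _), sum_distAt hP1 hpol1, hρ1]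

theorem sum_abs_stateKernel_sub_le {ε : ℝ} (hpol0 : ∀ s a, 0 ≤ pol s a)
    (hpol1 : ∀ s, ∑ a, pol s a = 1) (hε : ∀ s a, ∑ s', |Phat s a s' - P s a s'| ≤ ε)
    (s : S) :
    ∑ s', |stateKernel Phat pol s s' - stateKernel P pol s s'| ≤ ε :=
  calc ∑ s', |stateKernel Phat pol s s' - stateKernel P pol s s'|
      = ∑ s', |∑ a, pol s a * (Phat s a s' - P s a s')| := by
        simp only [stateKernel, ← sum_sub_distrib, mul_sub]
    _ ≤ ∑ a, |pol s a| * ∑ s', |Phat s a s' - P s a s'| := sum_abs_sum_mul_le _ _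
    _ ≤ ∑ a, pol s a * ε := sum_le_sum fun a _ => by
        rw [abs_of_nonneg (hpol0 s a)]; exact mul_le_mul_of_nonneg_left (hε s a) (hpol0 s a)
    _ = ε := by rw [← sum_mul, hpol1, one_mul]

theorem sum_abs_distAt_sub_le {ε : ℝ}
    (hP0 : ∀ s a s', 0 ≤ P s a s') (hP1 : ∀ s a, ∑ s', P s a s' = 1)
    (hPhat0 : ∀ s a s', 0 ≤ Phat s a s') (hPhat1 : ∀ s a, ∑ s', Phat s a s' = 1)
    (hpol0 : ∀ s a, 0 ≤ pol s a) (hpol1 : ∀ s, ∑ a, pol s a = 1)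
    (hρ0 : ∀ s, 0 ≤ ρ s) (hρ1 : ∑ s, ρ s = 1)
    (hε : ∀ s a, ∑ s', |Phat s a s' - P s a s'| ≤ ε) (t : ℕ) :
    ∑ s, |distAt Phat pol ρ t s - distAt P pol ρ t s| ≤ t * ε := by
  induction t with
  | zero => simp [distAt]
  | succ t ih =>
    set dh := distAt Phat pol ρ t
    set d := distAt P pol ρ t
    have hsplit : ∀ s', distAt Phat pol ρ (t + 1) s' - distAt P pol ρ (t + 1) s' =
        ∑ s, (dh s - d s) * stateKernel Phat pol s s' +
          ∑ s, d s * (stateKernel Phat pol s s' - stateKernel P pol s s') := fun s' => by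
      simp only [distAt_succ, ← sum_add_distrib, ← sum_sub_distrib]
      exact sum_congr rfl fun s _ => by ring
    have hdrift : ∑ s', |∑ s, (dh s - d s) * stateKernel Phat pol s s'| ≤ t * ε :=
      calc _ ≤ ∑ s, |dh s - d s| * ∑ s', |stateKernel Phat pol s s'| := sum_abs_sum_mul_le _ _
        _ = ∑ s, |dh s - d s| := by
            simp only [sum_abs_stateKernel hPhat0 hPhat1 hpol0 hpol1, mul_one]
        _ ≤ t * ε := ih
    have hperturb :
        ∑ s', |∑ s, d s * (stateKernel Phat pol s s' - stateKernel P pol s s')| ≤ ε :=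
      calc _ ≤ ∑ s, |d s| * ∑ s', |stateKernel Phat pol s s' - stateKernel P pol s s'| :=
            sum_abs_sum_mul_le _ _
        _ ≤ ∑ s, |d s| * ε := sum_le_sum fun s _ =>
            mul_le_mul_of_nonneg_left (sum_abs_stateKernel_sub_le hpol0 hpol1 hε s) (abs_nonneg _)
        _ = ε := by rw [← sum_mul, sum_abs_distAt hP0 hP1 hpol0 hpol1 hρ0 hρ1, one_mul]
    calc _ = ∑ s', |∑ s, (dh s - d s) * stateKernel Phat pol s s' +
            ∑ s, d s * (stateKernel Phat pol s s' - stateKernel P pol s s')| := by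
          simp only [hsplit]
      _ ≤ t * ε + ε := (sum_le_sum fun s' _ => abs_add_le _ _).trans
          (sum_add_distrib.trans_le (add_le_add hdrift hperturb))
      _ = (t + 1 : ℕ) * ε := by push_cast; ring

end MDP

theorem simulation_lemma_general {S A : Type*} [Fintype S] [Fintype A]
    (P Phat : S → A → S → ℝ) (pol : S → A → ℝ) (r : S → A → ℝ) (γ : ℝ)
    (ρ : S → ℝ) (rmax : ℝ) (u : S → A → ℝ)
    (hγ0 : 0 ≤ γ) (hγ1 : γ < 1)
    (hr : ∀ s a, 0 ≤ r s a ∧ r s a ≤ rmax)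
    (hP0 : ∀ s a s', 0 ≤ P s a s') (hP1 : ∀ s a, ∑ s', P s a s' = 1)
    (hPhat0 : ∀ s a s', 0 ≤ Phat s a s') (hPhat1 : ∀ s a, ∑ s', Phat s a s' = 1)
    (hpol0 : ∀ s a, 0 ≤ pol s a) (hpol1 : ∀ s, ∑ a, pol s a = 1)
    (hρ0 : ∀ s, 0 ≤ ρ s) (hρ1 : ∑ s, ρ s = 1)
    (hu : ∀ s a, tvDist (Phat s a) (P s a) ≤ u s a) :
    |ret Phat pol r γ ρ - ret P pol r γ ρ| ≤
      (2 * γ * rmax / (1 - γ) ^ 2) * ⨆ sa : S × A, u sa.1 sa.2 := by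
  set ustar := ⨆ sa : S × A, u sa.1 sa.2
  have hTV : ∀ s a, ∑ s', |Phat s a s' - P s a s'| ≤ 2 * ustar := fun s a => by
    have := (hu s a).trans
      (le_ciSup (f := fun sa : S × A => u sa.1 sa.2) (Finite.bddAbove_range _) (s, a))
    unfold tvDist at this
    linarith
  have hrmax : 0 ≤ rmax := by
    obtain ⟨s₀, -⟩ := nonempty_of_sum_ne_zero (hρ1.trans_ne one_ne_zero)
    exact (abs_nonneg _).trans (abs_policyReward_le hpol0 hpol1 hr s₀)
  set x := fun Q t => ∑ s, distAt Q pol ρ t s * policyReward pol r s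
  have hx : ∀ Q : S → A → S → ℝ, (∀ s a s', 0 ≤ Q s a s') → (∀ s a, ∑ s', Q s a s' = 1) →
      ∀ t, |x Q t| ≤ rmax := fun Q hQ0 hQ1 t =>
    (abs_sum_mul_le_of_abs_le _ _ (abs_policyReward_le hpol0 hpol1 hr)).trans_eq
      (by rw [sum_abs_distAt hQ0 hQ1 hpol0 hpol1 hρ0 hρ1, one_mul])
  have hdiff : ∀ t, |x Phat t - x P t| ≤ t * (2 * ustar * rmax) := fun t => by
    simp only [x, ← sum_sub_distrib, ← sub_mul]
    calc _ ≤ (∑ s, |distAt Phat pol ρ t s - distAt P pol ρ t s|) * rmax :=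
          abs_sum_mul_le_of_abs_le _ _ (abs_policyReward_le hpol0 hpol1 hr)
      _ ≤ (t * (2 * ustar)) * rmax := mul_le_mul_of_nonneg_right
          (sum_abs_distAt_sub_le hP0 hP1 hPhat0 hPhat1 hpol0 hpol1 hρ0 hρ1 hTV t) hrmax
      _ = t * (2 * ustar * rmax) := by ring
  rw [ret_eq, ret_eq, ← (summable_pow_mul_of_abs_le hγ0 hγ1 (hx Phat hPhat0 hPhat1)).tsum_sub
    (summable_pow_mul_of_abs_le hγ0 hγ1 (hx P hP0 hP1))]
  simp only [← mul_sub]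
  calc _ ≤ 2 * ustar * rmax * (γ / (1 - γ) ^ 2) := abs_tsum_pow_mul_le hγ0 hγ1 hdiff
    _ = _ := by ring

/-- Simulation lemma: if for all `(s,a)` the total variation distance between
two Markov transition kernels `P̂` and `P` is at most `u(s,a)`, rewards are
in `[0, r_max]`, and the policy and starting distribution are shared, then
the difference in expected discounted returns of any policy `π` under `P̂`
versus `P` is at most `(2 γ r_max / (1-γ)²) · sup_{s,a} u(s,a)`. -/
theorem simulation_lemma {S A : Type*} [Fintype S] [Fintype A]
    [Nonempty S] [Nonempty A]
    (P Phat : S → A → S → ℝ) (pol : S → A → ℝ) (r : S → A → ℝ) (γ : ℝ)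
    (ρ : S → ℝ) (rmax : ℝ) (u : S → A → ℝ)
    (hγ0 : 0 ≤ γ) (hγ1 : γ < 1)
    (hr : ∀ s a, 0 ≤ r s a ∧ r s a ≤ rmax)
    (hP0 : ∀ s a s', 0 ≤ P s a s') (hP1 : ∀ s a, ∑ s', P s a s' = 1)
    (hPhat0 : ∀ s a s', 0 ≤ Phat s a s') (hPhat1 : ∀ s a, ∑ s', Phat s a s' = 1)
    (hpol0 : ∀ s a, 0 ≤ pol s a) (hpol1 : ∀ s, ∑ a, pol s a = 1)
    (hρ0 : ∀ s, 0 ≤ ρ s) (hρ1 : ∑ s, ρ s = 1)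
    (hu : ∀ s a, tvDist (Phat s a) (P s a) ≤ u s a) :
    |ret Phat pol r γ ρ - ret P pol r γ ρ| ≤
      (2 * γ * rmax / (1 - γ) ^ 2) * ⨆ sa : S × A, u sa.1 sa.2 :=
  simulation_lemma_general P Phat pol r γ ρ rmax u hγ0 hγ1 hr hP0 hP1 hPhat0 hPhat1 hpol0 hpol1 hρ0
    hρ1 hu
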